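/- arXiv:1103.5121 — 2 statements merged into one kernel-verified Lean document; each statement's English description precedes it below -/
import Mathlib

section
/- Two first infinitesimal deformations (μ_0, μ_1) and (μ_0, μ̃_1) of the lax monoidal structure on F are equivalent (i.e. there exists a natural transformation φ_1^X : FX → FX with μ̃_1^{X,Y} - μ_1^{X,Y} = φ_1^{X⊗Y} μ^{X,Y} - μ^{X,Y}(φ_1^X ⊗ id) - μ^{X,Y}(id ⊗ φ_1^Y)) if and only if the 2-cocycles μ_1 and μ̃_1 differ by a Hochschild coboundary. Consequently, equivalence classes of first infinitesimal deformations of F are in bijection with the second Hochschild cohomology group H²(F). -/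
/-!
Both halves are rearrangements of additive identities between cochains: the defining equation
of `EquivDef` is `μ̃₁ - μ₁ = dφ` with its terms moved across, and the linearized associativity
equation is `dμ₁ = 0` with its terms split between the two sides. Hence the identity on cochains
identifies deformations with natural 2-cocycles and carries equivalence to cohomology.
-/

open CategoryTheory MonoidalCategory Functor.LaxMonoidal

namespace MonoidalHochschild

variable {C D : Type*} [Category C] [Category D] [MonoidalCategory C] [MonoidalCategory D]
  [Preadditive D] [MonoidalPreadditive D]

variable (F : C ⥤ D) [F.LaxMonoidal]

/-- A Hochschild `2`-cochain of the monoidal functor `F`: a family of morphisms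
`F X ⊗ F Y ⟶ F (X ⊗ Y)` (naturality is imposed separately). -/
abbrev Fam2 := ∀ X Y : C, F.obj X ⊗ F.obj Y ⟶ F.obj (X ⊗ Y)

/-- Naturality of a `1`-cochain. -/
def Nat1 (b : ∀ X : C, F.obj X ⟶ F.obj X) : Prop :=
  ∀ {X Y : C} (f : X ⟶ Y), b X ≫ F.map f = F.map f ≫ b Y

/-- Naturality of a `2`-cochain. -/
def Nat2 (c : Fam2 F) : Prop :=
  ∀ {X X' Y Y' : C} (f : X ⟶ X') (g : Y ⟶ Y'),
    (F.map f ⊗ₘ F.map g) ≫ c X' Y' = c X Y ≫ F.map (f ⊗ₘ g)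

/-- The Hochschild differential on `1`-cochains:
`(db)^{X,Y} = b^{X⊗Y} ∘ μ^{X,Y} - μ^{X,Y} ∘ (b^X ⊗ id) - μ^{X,Y} ∘ (id ⊗ b^Y)`. -/
def d1 (b : ∀ X : C, F.obj X ⟶ F.obj X) : Fam2 F := fun X Y =>
  μ F X Y ≫ b (X ⊗ Y) - (b X ▷ F.obj Y) ≫ μ F X Y - (F.obj X ◁ b Y) ≫ μ F X Y

/-- The Hochschild differential on `2`-cochains (associators made explicit):
`(dc)^{X,Y,Z} = -μ(id ⊗ c) + c^{X⊗Y,Z}(μ ⊗ id) - c^{X,Y⊗Z}(id ⊗ μ) + μ(c ⊗ id)`. -/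
def d2 (c : Fam2 F) :
    ∀ X Y Z : C, F.obj X ⊗ (F.obj Y ⊗ F.obj Z) ⟶ F.obj (X ⊗ (Y ⊗ Z)) := fun X Y Z =>
  - ((F.obj X ◁ c Y Z) ≫ μ F X (Y ⊗ Z))
  + ((α_ (F.obj X) (F.obj Y) (F.obj Z)).inv ≫ (μ F X Y ▷ F.obj Z) ≫
      c (X ⊗ Y) Z ≫ F.map (α_ X Y Z).hom)
  - ((F.obj X ◁ μ F Y Z) ≫ c X (Y ⊗ Z))
  + ((α_ (F.obj X) (F.obj Y) (F.obj Z)).inv ≫ (c X Y ▷ F.obj Z) ≫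
      μ F (X ⊗ Y) Z ≫ F.map (α_ X Y Z).hom)

/-- The Hochschild differential on `3`-cochains (associators made explicit):
`(dc)^{W,X,Y,Z} = μ(id⊗c) - c(μ⊗id⊗id) + c(id⊗μ⊗id) - c(id⊗id⊗μ) + μ(c⊗id)`. -/
def d3 (c : ∀ X Y Z : C, F.obj X ⊗ (F.obj Y ⊗ F.obj Z) ⟶ F.obj (X ⊗ (Y ⊗ Z))) :
    ∀ W X Y Z : C,
      F.obj W ⊗ (F.obj X ⊗ (F.obj Y ⊗ F.obj Z)) ⟶ F.obj (W ⊗ (X ⊗ (Y ⊗ Z))) :=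
  fun W X Y Z =>
  ((F.obj W ◁ c X Y Z) ≫ μ F W (X ⊗ (Y ⊗ Z)))
  - ((α_ (F.obj W) (F.obj X) (F.obj Y ⊗ F.obj Z)).inv ≫ ((μ F W X) ▷ (F.obj Y ⊗ F.obj Z)) ≫
      c (W ⊗ X) Y Z ≫ F.map (α_ W X (Y ⊗ Z)).hom)
  + ((F.obj W ◁ ((α_ (F.obj X) (F.obj Y) (F.obj Z)).inv ≫ (μ F X Y ▷ F.obj Z))) ≫
      c W (X ⊗ Y) Z ≫ F.map (W ◁ (α_ X Y Z).hom))
  - ((F.obj W ◁ (F.obj X ◁ μ F Y Z)) ≫ c W X (Y ⊗ Z))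
  + ((F.obj W ◁ (α_ (F.obj X) (F.obj Y) (F.obj Z)).inv) ≫
      (α_ (F.obj W) (F.obj X ⊗ F.obj Y) (F.obj Z)).inv ≫
      (c W X Y ▷ F.obj Z) ≫ μ F (W ⊗ (X ⊗ Y)) Z ≫
      F.map ((α_ W (X ⊗ Y) Z).hom ≫ (W ◁ (α_ X Y Z).hom)))

end MonoidalHochschild

open CategoryTheory MonoidalCategory Functor.LaxMonoidal MonoidalHochschild

section

variable {C D : Type*} [Category C] [Category D] [MonoidalCategory C] [MonoidalCategory D]
  [Abelian C] [Abelian D] [MonoidalPreadditive C] [MonoidalPreadditive D]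
  (F : C ⥤ D) [F.LaxMonoidal]

/-- First infinitesimal deformations of the lax monoidal structure of `F`:
natural 2-cochains `μ₁` satisfying the linearized associativity equation. -/
def InfDef : Type _ :=
  { μ₁ : Fam2 F // Nat2 F μ₁ ∧ ∀ X Y Z : C,
      (F.obj X ◁ μ F Y Z) ≫ μ₁ X (Y ⊗ Z) + (F.obj X ◁ μ₁ Y Z) ≫ μ F X (Y ⊗ Z) =
      (α_ (F.obj X) (F.obj Y) (F.obj Z)).inv ≫ (μ F X Y ▷ F.obj Z) ≫
          μ₁ (X ⊗ Y) Z ≫ F.map (α_ X Y Z).hom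
        + (α_ (F.obj X) (F.obj Y) (F.obj Z)).inv ≫ (μ₁ X Y ▷ F.obj Z) ≫
          μ F (X ⊗ Y) Z ≫ F.map (α_ X Y Z).hom }

/-- Natural Hochschild 2-cocycles of `F`. -/
def TwoCocycle : Type _ :=
  { c : Fam2 F // Nat2 F c ∧ ∀ X Y Z : C, d2 F c X Y Z = 0 }

/-- Equivalence of first infinitesimal deformations (as in the paper, at order one):
`μ₁ + μ ∘ φ = μ̃₁ + μ ∘ (φ ⊗ id) + μ ∘ (id ⊗ φ)` for some natural `φ`. -/
def EquivDef (μ₁ μ₁' : InfDef F) : Prop :=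
  ∃ φ : ∀ X : C, F.obj X ⟶ F.obj X, Nat1 F φ ∧ ∀ X Y : C,
    μ₁.1 X Y + μ F X Y ≫ φ (X ⊗ Y) =
      μ₁'.1 X Y + (φ X ▷ F.obj Y) ≫ μ F X Y + (F.obj X ◁ φ Y) ≫ μ F X Y

/-- Cohomologous 2-cocycles: they differ by the coboundary of a natural 1-cochain. -/
def Cohomologous (c c' : TwoCocycle F) : Prop :=
  ∃ φ : ∀ X : C, F.obj X ⟶ F.obj X, Nat1 F φ ∧ ∀ X Y : C,
    c'.1 X Y - c.1 X Y = d1 F φ X Y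

end

lemma add_eq_add_add_iff_sub_eq_sub_sub {G : Type*} [AddCommGroup G] {a a' p q r : G} :
    a + p = a' + q + r ↔ a' - a = p - q - r := by
  rw [sub_sub, sub_eq_sub_iff_add_eq_add, add_assoc, add_comm p, eq_comm]

lemma neg_add_sub_add_eq_zero_iff {G : Type*} [AddCommGroup G] {a b c d : G} :
    -a + b - c + d = 0 ↔ c + a = b + d := by
  rw [show -a + b - c + d = b + d - (c + a) by abel, sub_eq_zero, eq_comm]

namespace MonoidalHochschild

variable {C D : Type*} [Category C] [Category D] [MonoidalCategory C] [MonoidalCategory D]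
  [Preadditive D] (F : C ⥤ D) [F.LaxMonoidal]

lemma sub_eq_d1_iff (c c' : Fam2 F) (φ : ∀ X : C, F.obj X ⟶ F.obj X) (X Y : C) :
    c' X Y - c X Y = d1 F φ X Y ↔
      c X Y + μ F X Y ≫ φ (X ⊗ Y) =
        c' X Y + (φ X ▷ F.obj Y) ≫ μ F X Y + (F.obj X ◁ φ Y) ≫ μ F X Y :=
  add_eq_add_add_iff_sub_eq_sub_sub.symm

lemma d2_eq_zero_iff (c : Fam2 F) (X Y Z : C) :
    d2 F c X Y Z = 0 ↔
      (F.obj X ◁ μ F Y Z) ≫ c X (Y ⊗ Z) + (F.obj X ◁ c Y Z) ≫ μ F X (Y ⊗ Z) =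
      (α_ (F.obj X) (F.obj Y) (F.obj Z)).inv ≫ (μ F X Y ▷ F.obj Z) ≫
          c (X ⊗ Y) Z ≫ F.map (α_ X Y Z).hom
        + (α_ (F.obj X) (F.obj Y) (F.obj Z)).inv ≫ (c X Y ▷ F.obj Z) ≫
          μ F (X ⊗ Y) Z ≫ F.map (α_ X Y Z).hom :=
  neg_add_sub_add_eq_zero_iff

end MonoidalHochschild

section

variable {C D : Type*} [Category C] [Category D] [MonoidalCategory C] [MonoidalCategory D]
  [Abelian D] (F : C ⥤ D) [F.LaxMonoidal]

def infDefEquivTwoCocycle : InfDef F ≃ TwoCocycle F :=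
  Equiv.subtypeEquivRight fun c =>
    and_congr_right fun _ => forall₃_congr fun X Y Z => (d2_eq_zero_iff F c X Y Z).symm

lemma equivDef_iff_exists_d1 (μ₁ μ₁' : InfDef F) :
    EquivDef F μ₁ μ₁' ↔ ∃ φ : ∀ X : C, F.obj X ⟶ F.obj X, Nat1 F φ ∧ ∀ X Y : C,
      μ₁'.1 X Y - μ₁.1 X Y = d1 F φ X Y :=
  exists_congr fun φ =>
    and_congr_right fun _ => forall₂_congr fun X Y => (sub_eq_d1_iff F μ₁.1 μ₁'.1 φ X Y).symm

end

section

variable {C D : Type*} [Category C] [Category D] [MonoidalCategory C] [MonoidalCategory D]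
  [Abelian C] [Abelian D] [MonoidalPreadditive C] [MonoidalPreadditive D]
  (F : C ⥤ D) [F.LaxMonoidal]

/-- Two first infinitesimal deformations of the lax monoidal structure of `F`
are equivalent iff the corresponding 2-cocycles differ by a Hochschild coboundary; consequently
the equivalence classes of first infinitesimal deformations are in bijection with the second
Hochschild cohomology of the monoidal functor `F`. -/
theorem infinitesimal_deformations_and_H2 :
    (∀ μ₁ μ₁' : InfDef F, EquivDef F μ₁ μ₁' ↔
      (∃ φ : ∀ X : C, F.obj X ⟶ F.obj X, Nat1 F φ ∧ ∀ X Y : C,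
        μ₁'.1 X Y - μ₁.1 X Y = d1 F φ X Y)) ∧
    Nonempty (Quot (EquivDef F) ≃ Quot (Cohomologous F)) :=
  ⟨equivDef_iff_exists_d1 F,
    ⟨Quot.congr (infDefEquivTwoCocycle F) (equivDef_iff_exists_d1 F)⟩⟩

end
end

section
/- Let (μ_0,…,μ_n) be an n-th infinitesimal deformation of the lax monoidal structure on F (satisfying Σ_{i+j=k} μ_i^{X,Y⊗Z}(id ⊗ μ_j^{Y,Z}) = Σ_{i+j=k} μ_i^{X⊗Y,Z}(μ_j^{X,Y} ⊗ id) for 1 ≤ k ≤ n). Then the 3-cochain O^{X,Y,Z} := Σ_{j=1}^{n} [μ_{n+1-j}^{X,Y⊗Z}(id ⊗ μ_j^{Y,Z}) - μ_{n+1-j}^{X⊗Y,Z}(μ_j^{X,Y} ⊗ id)] is a Hochschild 3-cocycle: dO = 0. The deformation lifts to an (n+1)-st infinitesimal deformation if and only if O is a coboundary, i.e. O = dμ_{n+1} for some 2-cochain μ_{n+1}. -/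
/-!
Write `a ∘ b = a(1 ⊗ b) - a(b ⊗ 1)` for the Gerstenhaber composition of `2`-cochains (`circ`).
The order-`k` deformation equation says `Σ_{i+j=k} μᵢ ∘ μⱼ = 0`, the obstruction is the sum of
`μᵢ ∘ μⱼ` over `i + j = n + 1` with `i, j ≥ 1`, and `dν = -(μ ∘ ν + ν ∘ μ)`; comparing the three
gives the lifting criterion.

For the cocycle property let `δₐ` be the differential of `3`-cochains with `μ` replaced by `a`.
Expanding `δₐ (b ∘ c)` gives ten composites of `a`, `b`, `c`; summed over `a = μᵢ`, `b = μₚ`,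
`c = μᵣ` with `i + p + r = N` they cancel after permuting the indices (the pre-Lie identity), so
`Σᵢ δ_{μᵢ} (Σ_{p+r=N-i} μₚ ∘ μᵣ) = 0`. Take `N = n + 1` and `μ_{n+1} := 0`: the terms with
`1 ≤ i ≤ n` vanish by the deformation equations, the term `i = n + 1` vanishes, and the term
`i = 0` is `dO`.
-/

open CategoryTheory MonoidalCategory Functor.LaxMonoidal

section Simplex

open Finset

variable {M : Type*} [AddCommGroup M]

theorem sum_simplex_eq_sum_filter (N : ℕ) (f : ℕ → ℕ → M) :
    ∑ i ∈ range (N + 1), ∑ p ∈ range (N - i + 1), f i p =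
      ∑ x ∈ (range (N + 1) ×ˢ range (N + 1)).filter (fun x => x.1 + x.2 ≤ N), f x.1 x.2 :=
  (sum_finset_product' _ _ _ fun x => by simp only [mem_filter, mem_product, mem_range]; omega).symm

theorem sum_simplex_rotate (N : ℕ) (f : ℕ → ℕ → ℕ → M) :
    ∑ i ∈ range (N + 1), ∑ p ∈ range (N - i + 1), f i p (N - i - p) =
      ∑ i ∈ range (N + 1), ∑ p ∈ range (N - i + 1), f p (N - i - p) i := by
  rw [sum_simplex_eq_sum_filter N (fun i p => f i p (N - i - p)),
    sum_simplex_eq_sum_filter N (fun i p => f p (N - i - p) i)]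
  refine sum_nbij' (fun x => (N - x.1 - x.2, x.1)) (fun x => (x.2, N - x.1 - x.2))
    ?_ ?_ ?_ ?_ ?_ <;> intro x hx <;> simp only [mem_filter, mem_product, mem_range] at hx
  · simp only [mem_filter, mem_product, mem_range]; omega
  · simp only [mem_filter, mem_product, mem_range]; omega
  · ext <;> omega
  · ext <;> omega
  · congr 1; omega

theorem sum_simplex_swap (N : ℕ) (f : ℕ → ℕ → ℕ → M) :
    ∑ i ∈ range (N + 1), ∑ p ∈ range (N - i + 1), f i p (N - i - p) =
      ∑ i ∈ range (N + 1), ∑ p ∈ range (N - i + 1), f (N - i - p) p i := by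
  rw [sum_simplex_eq_sum_filter N (fun i p => f i p (N - i - p)),
    sum_simplex_eq_sum_filter N (fun i p => f (N - i - p) p i)]
  refine sum_nbij' (fun x => (N - x.1 - x.2, x.2)) (fun x => (N - x.1 - x.2, x.2))
    ?_ ?_ ?_ ?_ ?_ <;> intro x hx <;> simp only [mem_filter, mem_product, mem_range] at hx
  · simp only [mem_filter, mem_product, mem_range]; omega
  · simp only [mem_filter, mem_product, mem_range]; omega
  · ext <;> omega
  · ext <;> omega
  · congr 1; omega

/-- The ten composites of `MonoidalHochschild.cobound3_circ`, summed over `i + p + r = N`, cancel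
in pairs. -/
theorem sum_simplex_preLie (N : ℕ) (rc rm lm lc bal : ℕ → ℕ → ℕ → M) :
    ∑ i ∈ range (N + 1), ∑ p ∈ range (N - i + 1),
      (rc i p (N - i - p) - rm i p (N - i - p) + lm i p (N - i - p) - lc i p (N - i - p)
        - bal p i (N - i - p) + lc p (N - i - p) i + rm p (N - i - p) i - lm p (N - i - p) i
        - rc p (N - i - p) i + bal p (N - i - p) i) = 0 := by
  simp only [sum_add_distrib, sum_sub_distrib]
  rw [sum_simplex_rotate N rc, sum_simplex_rotate N rm, sum_simplex_rotate N lm,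
    sum_simplex_rotate N lc, sum_simplex_swap N (fun i p r => bal p r i)]
  abel

end Simplex

namespace MonoidalHochschild

open Finset

section Cochains

variable {C D : Type*} [Category C] [Category D] [MonoidalCategory C] [MonoidalCategory D]
  [Preadditive D]

variable (F : C ⥤ D)

abbrev Fam3 := ∀ X Y Z : C, F.obj X ⊗ (F.obj Y ⊗ F.obj Z) ⟶ F.obj (X ⊗ (Y ⊗ Z))

def circ (a b : Fam2 F) : Fam3 F := fun X Y Z =>
  (F.obj X ◁ b Y Z) ≫ a X (Y ⊗ Z)
    - (α_ (F.obj X) (F.obj Y) (F.obj Z)).inv ≫ (b X Y ▷ F.obj Z) ≫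
        a (X ⊗ Y) Z ≫ F.map (α_ X Y Z).hom

def assocDefect (μs : ℕ → Fam2 F) (k : ℕ) : Fam3 F := fun X Y Z =>
  ∑ i ∈ range (k + 1), circ F (μs i) (μs (k - i)) X Y Z

theorem assocDefect_congr {μs μs' : ℕ → Fam2 F} {k : ℕ} (h : ∀ m ≤ k, μs m = μs' m) :
    assocDefect F μs k = assocDefect F μs' k := by
  funext X Y Z
  refine sum_congr rfl fun i hi => ?_
  rw [mem_range] at hi
  rw [h i (by omega), h (k - i) (by omega)]

/-- `d3` with the multiplication `μ` replaced by an arbitrary `2`-cochain `m`. -/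
def cobound3 (m : Fam2 F) (c : Fam3 F) (W X Y Z : C) :
    F.obj W ⊗ (F.obj X ⊗ (F.obj Y ⊗ F.obj Z)) ⟶ F.obj (W ⊗ (X ⊗ (Y ⊗ Z))) :=
  ((F.obj W ◁ c X Y Z) ≫ m W (X ⊗ (Y ⊗ Z)))
  - ((α_ (F.obj W) (F.obj X) (F.obj Y ⊗ F.obj Z)).inv ≫ ((m W X) ▷ (F.obj Y ⊗ F.obj Z)) ≫
      c (W ⊗ X) Y Z ≫ F.map (α_ W X (Y ⊗ Z)).hom)
  + ((F.obj W ◁ ((α_ (F.obj X) (F.obj Y) (F.obj Z)).inv ≫ (m X Y ▷ F.obj Z))) ≫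
      c W (X ⊗ Y) Z ≫ F.map (W ◁ (α_ X Y Z).hom))
  - ((F.obj W ◁ (F.obj X ◁ m Y Z)) ≫ c W X (Y ⊗ Z))
  + ((F.obj W ◁ (α_ (F.obj X) (F.obj Y) (F.obj Z)).inv) ≫
      (α_ (F.obj W) (F.obj X ⊗ F.obj Y) (F.obj Z)).inv ≫
      (c W X Y ▷ F.obj Z) ≫ m (W ⊗ (X ⊗ Y)) Z ≫
      F.map ((α_ W (X ⊗ Y) Z).hom ≫ (W ◁ (α_ X Y Z).hom)))

theorem d3_eq_cobound3 [F.LaxMonoidal] (c : Fam3 F) (W X Y Z : C) :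
    d3 F c W X Y Z = cobound3 F (fun X Y => μ F X Y) c W X Y Z :=
  rfl

theorem d2_eq_neg_circ_add_circ [F.LaxMonoidal] (c : Fam2 F) (X Y Z : C) :
    d2 F c X Y Z =
      -(circ F (fun X Y => μ F X Y) c X Y Z + circ F c (fun X Y => μ F X Y) X Y Z) := by
  simp only [d2, circ]
  abel

/- The five composites of `p` (outermost), `q` and `r` (innermost), named after the bracketing
of `wxyz`: `w(x(yz))`, `w((xy)z)`, `(w(xy))z`, `((wx)y)z` and `(wx)(yz)` (where `q` takes `wx`
and `r` takes `yz`). -/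

section Trees

variable (p q r : Fam2 F) (W X Y Z : C)

def rightComb : F.obj W ⊗ (F.obj X ⊗ (F.obj Y ⊗ F.obj Z)) ⟶ F.obj (W ⊗ (X ⊗ (Y ⊗ Z))) :=
  (F.obj W ◁ ((F.obj X ◁ r Y Z) ≫ q X (Y ⊗ Z))) ≫ p W (X ⊗ (Y ⊗ Z))

def rightMiddle : F.obj W ⊗ (F.obj X ⊗ (F.obj Y ⊗ F.obj Z)) ⟶ F.obj (W ⊗ (X ⊗ (Y ⊗ Z))) :=
  (F.obj W ◁ ((α_ (F.obj X) (F.obj Y) (F.obj Z)).inv ≫ (r X Y ▷ F.obj Z) ≫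
    q (X ⊗ Y) Z ≫ F.map (α_ X Y Z).hom)) ≫ p W (X ⊗ (Y ⊗ Z))

def leftMiddle : F.obj W ⊗ (F.obj X ⊗ (F.obj Y ⊗ F.obj Z)) ⟶ F.obj (W ⊗ (X ⊗ (Y ⊗ Z))) :=
  (F.obj W ◁ (α_ (F.obj X) (F.obj Y) (F.obj Z)).inv) ≫
    (α_ (F.obj W) (F.obj X ⊗ F.obj Y) (F.obj Z)).inv ≫
    (((F.obj W ◁ r X Y) ≫ q W (X ⊗ Y)) ▷ F.obj Z) ≫ p (W ⊗ (X ⊗ Y)) Z ≫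
    F.map ((α_ W (X ⊗ Y) Z).hom ≫ (W ◁ (α_ X Y Z).hom))

def leftComb : F.obj W ⊗ (F.obj X ⊗ (F.obj Y ⊗ F.obj Z)) ⟶ F.obj (W ⊗ (X ⊗ (Y ⊗ Z))) :=
  (F.obj W ◁ (α_ (F.obj X) (F.obj Y) (F.obj Z)).inv) ≫
    (α_ (F.obj W) (F.obj X ⊗ F.obj Y) (F.obj Z)).inv ≫
    (((α_ (F.obj W) (F.obj X) (F.obj Y)).inv ≫ (r W X ▷ F.obj Y) ≫
        q (W ⊗ X) Y ≫ F.map (α_ W X Y).hom) ▷ F.obj Z) ≫ p (W ⊗ (X ⊗ Y)) Z ≫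
    F.map ((α_ W (X ⊗ Y) Z).hom ≫ (W ◁ (α_ X Y Z).hom))

def balanced : F.obj W ⊗ (F.obj X ⊗ (F.obj Y ⊗ F.obj Z)) ⟶ F.obj (W ⊗ (X ⊗ (Y ⊗ Z))) :=
  (α_ (F.obj W) (F.obj X) (F.obj Y ⊗ F.obj Z)).inv ≫ (q W X ▷ (F.obj Y ⊗ F.obj Z)) ≫
    (F.obj (W ⊗ X) ◁ r Y Z) ≫ p (W ⊗ X) (Y ⊗ Z) ≫ F.map (α_ W X (Y ⊗ Z)).hom

end Trees

section Insertions

variable {p : Fam2 F} (q m : Fam2 F) (W X Y Z : C)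

theorem whiskerRight_comp_circ (hp : Nat2 F p) :
    (α_ (F.obj W) (F.obj X) (F.obj Y ⊗ F.obj Z)).inv ≫ (m W X ▷ (F.obj Y ⊗ F.obj Z)) ≫
      circ F p q (W ⊗ X) Y Z ≫ F.map (α_ W X (Y ⊗ Z)).hom =
    balanced F p m q W X Y Z - leftComb F p q m W X Y Z := by
  rw [circ, Preadditive.sub_comp, Preadditive.comp_sub, Preadditive.comp_sub]
  congr 1
  · simp [balanced]
  · have hp' := hp (α_ W X Y).hom (𝟙 Z)
    simp only [F.map_id, tensorHom_id] at hp'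
    rw [leftComb, comp_whiskerRight, comp_whiskerRight, comp_whiskerRight]
    slice_rhs 6 7 => rw [hp']
    slice_rhs 1 3 => rw [MonoidalCategory.pentagon_inv]
    slice_lhs 2 3 => rw [associator_inv_naturality_left]
    simp only [Category.assoc, ← F.map_comp, MonoidalCategory.pentagon]

theorem whiskerLeft_whiskerRight_comp_circ (hp : Nat2 F p) :
    (F.obj W ◁ ((α_ (F.obj X) (F.obj Y) (F.obj Z)).inv ≫ (m X Y ▷ F.obj Z))) ≫
      circ F p q W (X ⊗ Y) Z ≫ F.map (W ◁ (α_ X Y Z).hom) =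
    rightMiddle F p q m W X Y Z - leftMiddle F p q m W X Y Z := by
  rw [circ, Preadditive.sub_comp, Preadditive.comp_sub]
  congr 1
  · have hp' := hp (𝟙 W) (α_ X Y Z).hom
    simp only [F.map_id, id_tensorHom] at hp'
    simp only [rightMiddle, MonoidalCategory.whiskerLeft_comp, Category.assoc, hp']
  · rw [leftMiddle, MonoidalCategory.whiskerLeft_comp]
    slice_lhs 2 3 => rw [associator_inv_naturality_middle]
    simp [comp_whiskerRight]

theorem whiskerLeft_whiskerLeft_comp_circ :
    (F.obj W ◁ (F.obj X ◁ m Y Z)) ≫ circ F p q W X (Y ⊗ Z) =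
    rightComb F p q m W X Y Z - balanced F p q m W X Y Z := by
  rw [circ, Preadditive.comp_sub]
  congr 1
  · rw [rightComb, MonoidalCategory.whiskerLeft_comp, Category.assoc]
  · rw [balanced]
    slice_lhs 1 2 => rw [associator_inv_naturality_right]
    slice_lhs 2 3 => rw [whisker_exchange]
    simp

theorem circ_zero_left : circ F 0 q X Y Z = 0 := by
  simp [circ]

end Insertions

end Cochains

section MonoidalPreadditive

variable {C D : Type*} [Category C] [Category D] [MonoidalCategory C] [MonoidalCategory D]
  [Preadditive D] [MonoidalPreadditive D]

theorem whiskerLeft_sub (P : D) {Q R : D} (f g : Q ⟶ R) : P ◁ (f - g) = P ◁ f - P ◁ g :=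
  (tensorLeft P).map_sub

theorem sub_whiskerRight {Q R : D} (f g : Q ⟶ R) (P : D) : (f - g) ▷ P = f ▷ P - g ▷ P :=
  (tensorRight P).map_sub

variable (F : C ⥤ D) (p q m : Fam2 F) (W X Y Z : C)

theorem whiskerLeft_circ_comp :
    (F.obj W ◁ circ F q m X Y Z) ≫ p W (X ⊗ (Y ⊗ Z)) =
      rightComb F p q m W X Y Z - rightMiddle F p q m W X Y Z := by
  rw [circ, whiskerLeft_sub, Preadditive.sub_comp]; rfl

theorem circ_whiskerRight_comp :
    (F.obj W ◁ (α_ (F.obj X) (F.obj Y) (F.obj Z)).inv) ≫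
      (α_ (F.obj W) (F.obj X ⊗ F.obj Y) (F.obj Z)).inv ≫
      (circ F q m W X Y ▷ F.obj Z) ≫ p (W ⊗ (X ⊗ Y)) Z ≫
      F.map ((α_ W (X ⊗ Y) Z).hom ≫ (W ◁ (α_ X Y Z).hom)) =
    leftMiddle F p q m W X Y Z - leftComb F p q m W X Y Z := by
  rw [circ, sub_whiskerRight, Preadditive.sub_comp, Preadditive.comp_sub, Preadditive.comp_sub]
  rfl

theorem cobound3_circ (hp : Nat2 F p) :
    cobound3 F m (circ F p q) W X Y Z =
      rightComb F m p q W X Y Z - rightMiddle F m p q W X Y Z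
      + leftMiddle F m p q W X Y Z - leftComb F m p q W X Y Z
      - balanced F p m q W X Y Z + leftComb F p q m W X Y Z
      + rightMiddle F p q m W X Y Z - leftMiddle F p q m W X Y Z
      - rightComb F p q m W X Y Z + balanced F p q m W X Y Z := by
  rw [cobound3, whiskerLeft_circ_comp, whiskerRight_comp_circ F q m W X Y Z hp,
    whiskerLeft_whiskerRight_comp_circ F q m W X Y Z hp, whiskerLeft_whiskerLeft_comp_circ,
    circ_whiskerRight_comp]
  abel

theorem circ_zero_right : circ F p 0 X Y Z = 0 := by
  simp [circ]

theorem cobound3_zero_left (c : Fam3 F) : cobound3 F 0 c W X Y Z = 0 := by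
  simp [cobound3]

theorem cobound3_zero_right : cobound3 F m 0 W X Y Z = 0 := by
  simp [cobound3]

theorem cobound3_sum {ι : Type*} (s : Finset ι) (c : ι → Fam3 F) :
    cobound3 F m (fun X Y Z => ∑ j ∈ s, c j X Y Z) W X Y Z =
      ∑ j ∈ s, cobound3 F m (c j) W X Y Z := by
  simp only [cobound3, whiskerLeft_sum, sum_whiskerRight, Preadditive.sum_comp,
    Preadditive.comp_sum, sum_sub_distrib, sum_add_distrib]

theorem sum_cobound3_assocDefect (ν : ℕ → Fam2 F) (hν : ∀ i, Nat2 F (ν i)) (N : ℕ) :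
    ∑ i ∈ range (N + 1), cobound3 F (ν i) (assocDefect F ν (N - i)) W X Y Z = 0 := by
  have hexpand : ∀ i, cobound3 F (ν i) (assocDefect F ν (N - i)) W X Y Z =
      ∑ p ∈ range (N - i + 1), cobound3 F (ν i) (circ F (ν p) (ν (N - i - p))) W X Y Z :=
    fun i => cobound3_sum F (ν i) W X Y Z _ fun p => circ F (ν p) (ν (N - i - p))
  simp only [hexpand, cobound3_circ F _ _ _ W X Y Z (hν _)]
  exact sum_simplex_preLie N (fun i p r => rightComb F (ν i) (ν p) (ν r) W X Y Z)
    (fun i p r => rightMiddle F (ν i) (ν p) (ν r) W X Y Z)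
    (fun i p r => leftMiddle F (ν i) (ν p) (ν r) W X Y Z)
    (fun i p r => leftComb F (ν i) (ν p) (ν r) W X Y Z)
    (fun i p r => balanced F (ν i) (ν p) (ν r) W X Y Z)

end MonoidalPreadditive

end MonoidalHochschild

open CategoryTheory MonoidalCategory Functor.LaxMonoidal MonoidalHochschild

section

variable {C D : Type*} [Category C] [Category D] [MonoidalCategory C] [MonoidalCategory D]
  [Abelian C] [Abelian D] [MonoidalPreadditive C] [MonoidalPreadditive D]
  (F : C ⥤ D) [F.LaxMonoidal]

/-- The order-`k` deformation equation
`Σ_{i+j=k} μᵢ^{X,Y⊗Z}(id ⊗ μⱼ^{Y,Z}) = Σ_{i+j=k} μᵢ^{X⊗Y,Z}(μⱼ^{X,Y} ⊗ id)`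
(associators made explicit). -/
def OrderEq (μs : ℕ → Fam2 F) (k : ℕ) : Prop :=
  ∀ X Y Z : C,
    (∑ i ∈ Finset.range (k + 1),
      (F.obj X ◁ μs (k - i) Y Z) ≫ μs i X (Y ⊗ Z)) =
    (∑ i ∈ Finset.range (k + 1),
      (α_ (F.obj X) (F.obj Y) (F.obj Z)).inv ≫ (μs (k - i) X Y ▷ F.obj Z) ≫
        μs i (X ⊗ Y) Z ≫ F.map (α_ X Y Z).hom)

/-- The obstruction 3-cochain
`O^{X,Y,Z} = Σ_{j=1}^{n} [μ_{n+1-j}^{X,Y⊗Z}(id ⊗ μⱼ^{Y,Z}) - μ_{n+1-j}^{X⊗Y,Z}(μⱼ^{X,Y} ⊗ id)]`. -/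
def Obstruction (μs : ℕ → Fam2 F) (n : ℕ) :
    ∀ X Y Z : C, F.obj X ⊗ (F.obj Y ⊗ F.obj Z) ⟶ F.obj (X ⊗ (Y ⊗ Z)) := fun X Y Z =>
  ∑ j ∈ Finset.Icc 1 n,
    ((F.obj X ◁ μs j Y Z) ≫ μs (n + 1 - j) X (Y ⊗ Z)
      - (α_ (F.obj X) (F.obj Y) (F.obj Z)).inv ≫ (μs j X Y ▷ F.obj Z) ≫
          μs (n + 1 - j) (X ⊗ Y) Z ≫ F.map (α_ X Y Z).hom)

end

section

open Finset

variable {C D : Type*} [Category C] [Category D] [MonoidalCategory C] [MonoidalCategory D]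
  [Abelian D] (F : C ⥤ D)

theorem orderEq_iff_assocDefect_eq_zero (μs : ℕ → Fam2 F) (k : ℕ) :
    OrderEq F μs k ↔ ∀ X Y Z : C, assocDefect F μs k X Y Z = 0 := by
  simp only [OrderEq, assocDefect, circ, sum_sub_distrib, sub_eq_zero]

theorem obstruction_eq_sum_circ (μs : ℕ → Fam2 F) (n : ℕ) (X Y Z : C) :
    Obstruction F μs n X Y Z = ∑ j ∈ Icc 1 n, circ F (μs (n + 1 - j)) (μs j) X Y Z :=
  rfl

theorem assocDefect_update_top (μs : ℕ → Fam2 F) (n : ℕ) (x : Fam2 F) (X Y Z : C) :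
    assocDefect F (fun m => if m = n + 1 then x else μs m) (n + 1) X Y Z =
      Obstruction F μs n X Y Z + circ F (μs 0) x X Y Z + circ F x (μs 0) X Y Z := by
  rw [assocDefect, sum_range_succ, sum_range_succ']
  simp only [Nat.sub_zero, Nat.sub_self, if_pos]
  have hobs : Obstruction F μs n X Y Z =
      ∑ i ∈ range n, circ F (μs (i + 1)) (μs (n + 1 - (i + 1))) X Y Z := by
    rw [obstruction_eq_sum_circ]
    refine sum_nbij' (fun j => n - j) (fun i => n - i) ?_ ?_ ?_ ?_ ?_ <;> intro j hj <;>
      simp only [mem_Icc, mem_range] at hj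
    · simp only [mem_range]; omega
    · simp only [mem_Icc]; omega
    · omega
    · omega
    · congr <;> omega
  rw [hobs, if_neg (Nat.succ_ne_zero n).symm]
  congr 2
  refine sum_congr rfl fun k hk => ?_
  rw [mem_range] at hk
  rw [if_neg (by omega), if_neg (by omega)]

theorem d3_obstruction_eq_zero [MonoidalPreadditive D] [F.LaxMonoidal] (μs : ℕ → Fam2 F)
    (n : ℕ) (h0 : μs 0 = fun X Y => μ F X Y) (hnat : ∀ i, Nat2 F (μs i))
    (hdef : ∀ k, 1 ≤ k → k ≤ n → OrderEq F μs k) (W X Y Z : C) :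
    d3 F (Obstruction F μs n) W X Y Z = 0 := by
  set ν : ℕ → Fam2 F := fun m => if m = n + 1 then 0 else μs m
  have hν : ∀ i, Nat2 F (ν i) := by
    intro i
    by_cases hi : i = n + 1
    · simp only [ν, if_pos hi]
      intros
      simp
    · simp only [ν, if_neg hi]
      exact hnat i
  have hlow : ∀ i ∈ range n,
      cobound3 F (ν (i + 1)) (assocDefect F ν (n + 1 - (i + 1))) W X Y Z = 0 := by
    intro i hi
    rw [mem_range] at hi
    have hagree : ∀ m ≤ n + 1 - (i + 1), ν m = μs m := fun m hm => if_neg (by omega)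
    have hzero : assocDefect F μs (n + 1 - (i + 1)) = 0 := funext₃
      ((orderEq_iff_assocDefect_eq_zero F μs _).mp (hdef _ (by omega) (by omega)))
    rw [assocDefect_congr F hagree, hzero, cobound3_zero_right]
  have hbottom : assocDefect F ν (n + 1) = Obstruction F μs n := by
    funext X Y Z
    rw [assocDefect_update_top, circ_zero_right, circ_zero_left, add_zero, add_zero]
  have key := sum_cobound3_assocDefect F W X Y Z ν hν (n + 1)
  rw [sum_range_succ, sum_range_succ', sum_eq_zero hlow, Nat.sub_zero, hbottom,
    show ν (n + 1) = 0 from if_pos rfl, cobound3_zero_left, zero_add, add_zero,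
    show ν 0 = μs 0 from if_neg (Nat.succ_ne_zero n).symm, h0] at key
  rwa [d3_eq_cobound3]

theorem orderEq_update_iff_obstruction_eq_d2 [F.LaxMonoidal] (μs : ℕ → Fam2 F) (n : ℕ)
    (h0 : μs 0 = fun X Y => μ F X Y) (x : Fam2 F) :
    OrderEq F (fun m => if m = n + 1 then x else μs m) (n + 1) ↔
      ∀ X Y Z : C, Obstruction F μs n X Y Z = d2 F x X Y Z := by
  rw [orderEq_iff_assocDefect_eq_zero]
  refine forall₃_congr fun X Y Z => ?_
  rw [assocDefect_update_top, d2_eq_neg_circ_add_circ, ← h0, eq_neg_iff_add_eq_zero, add_assoc]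

end

section

variable {C D : Type*} [Category C] [Category D] [MonoidalCategory C] [MonoidalCategory D]
  [Abelian C] [Abelian D] [MonoidalPreadditive C] [MonoidalPreadditive D]
  (F : C ⥤ D) [F.LaxMonoidal]

/-- If `(μ₀,…,μₙ)` is an `n`-th infinitesimal deformation of the lax monoidal
structure of `F`, then the obstruction `O` is a Hochschild 3-cocycle, `dO = 0`; and the
deformation lifts to an `(n+1)`-st infinitesimal deformation iff `O` is a coboundary,
i.e. `O = dμ_{n+1}` for some (natural) 2-cochain `μ_{n+1}`. -/
theorem obstruction_is_three_cocycle_and_lifting_criterion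
    (μs : ℕ → Fam2 F) (n : ℕ)
    (h0 : μs 0 = fun X Y => μ F X Y)
    (hnat : ∀ i, Nat2 F (μs i))
    (hdef : ∀ k, 1 ≤ k → k ≤ n → OrderEq F μs k) :
    (∀ W X Y Z : C, d3 F (Obstruction F μs n) W X Y Z = 0) ∧
    ((∃ μnext : Fam2 F, Nat2 F μnext ∧
        OrderEq F (fun m => if m = n + 1 then μnext else μs m) (n + 1)) ↔
      (∃ μnext : Fam2 F, Nat2 F μnext ∧
        ∀ X Y Z : C, Obstruction F μs n X Y Z = d2 F μnext X Y Z)) :=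
  ⟨d3_obstruction_eq_zero F μs n h0 hnat hdef,
    exists_congr fun ν => and_congr_right fun _ =>
      orderEq_update_iff_obstruction_eq_d2 F μs n h0 ν⟩

end
end
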